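/- arXiv:1902.11136 — 2 statements merged into one kernel-verified Lean document; each statement's English description precedes it below -/
import Mathlib

section
/- Adjoint State Equation (Theorem 1). Suppose that for every parameter θ the trajectory X^θ satisfies the forward state equation d/dt X^θ_t = F_θ(X^θ_t) on [0,T] with initial condition X^θ_0 = g(θ), and that (θ,t) ↦ X^θ_t is twice continuously differentiable. Let λ : [0,T] → ℝⁿ be the solution, solved backward from the final condition λ_T = 0, of the adjoint equation d/dt λ_t = A_t λ_t + B_t, where A_t = −(∂_X F_θ(X^θ_t))* is the negative adjoint (transpose) of the Jacobian of F_θ at X^θ_t and B_t = 2 (∂_X H(X^θ_t))*(H(X^θ_t) − Y_t). Then the derivative of the cost J(θ) = ∫₀ᵀ ‖Y_t − H(X^θ_t)‖² dt with respect to θ, applied to any direction δθ ∈ ℝᵖ, equals −∫₀ᵀ ⟨λ_t, (∂_θ F_θ(X^θ_t))·δθ⟩ dt − ⟨λ_0, (∂_θ g(θ))·δθ⟩. -/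
/-!
Perturbing `θ` in a direction `δθ` perturbs the trajectory by `δX t = ∂_θ X^θ_t δθ`. By symmetry of
the second derivative of `(θ, t) ↦ X^θ_t`, this solves the linearised state equation
`δX' = ∂_X F δX + ∂_θ F δθ`, with `δX 0 = ∂_θ g δθ`. Differentiating under the integral sign,
`dJ δθ = ∫ 2 ⟪H (X t) - Y t, ∂_X H δX t⟫ = ∫ ⟪B t, δX t⟫`. Because `λ` solves the adjoint equation,
the `∂_X F` terms cancel in `d/dt ⟪λ t, δX t⟫ = ⟪B t, δX t⟫ + ⟪λ t, ∂_θ F δθ⟫`, and integrating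
over `[0, T]` with `λ T = 0` gives the formula.
-/

open Set MeasureTheory Filter Topology ContinuousLinearMap
open Function (uncurry)
open scoped RealInnerProductSpace

section Partial

variable {E F G : Type*} [NormedAddCommGroup E] [NormedSpace ℝ E] [NormedAddCommGroup F]
  [NormedSpace ℝ F] [NormedAddCommGroup G] [NormedSpace ℝ G] {f : E → F → G} {x : E} {y : F}

theorem DifferentiableAt.hasFDerivAt_uncurry_left
    (hf : DifferentiableAt ℝ (uncurry f) (x, y)) :
    HasFDerivAt (fun x' => f x' y) ((fderiv ℝ (uncurry f) (x, y)).comp (inl ℝ E F)) x :=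
  (hf.hasFDerivAt.comp x (hasFDerivAt_prodMk_left (𝕜 := ℝ) x y) :)

theorem DifferentiableAt.hasFDerivAt_uncurry_right
    (hf : DifferentiableAt ℝ (uncurry f) (x, y)) :
    HasFDerivAt (f x) ((fderiv ℝ (uncurry f) (x, y)).comp (inr ℝ E F)) y :=
  hf.hasFDerivAt.comp y (hasFDerivAt_prodMk_right (𝕜 := ℝ) x y)

theorem fderiv_uncurry_apply (hf : DifferentiableAt ℝ (uncurry f) (x, y)) (u : E) (v : F) :
    fderiv ℝ (uncurry f) (x, y) (u, v)
      = fderiv ℝ (fun x' => f x' y) x u + fderiv ℝ (f x) y v := by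
  rw [hf.hasFDerivAt_uncurry_left.fderiv, hf.hasFDerivAt_uncurry_right.fderiv, comp_apply,
    comp_apply, inl_apply, inr_apply, ← map_add, Prod.mk_add_mk, add_zero, zero_add]

theorem ContDiff.continuous_fderiv_uncurry_left (hf : ContDiff ℝ 1 (uncurry f)) :
    Continuous (uncurry fun x y => fderiv ℝ (fun x' => f x' y) x) := by
  have hd := hf.differentiable one_ne_zero
  have : (uncurry fun x y => fderiv ℝ (fun x' => f x' y) x)
      = fun q => (fderiv ℝ (uncurry f) q).comp (inl ℝ E F) := by
    ext1 q; exact (hd q).hasFDerivAt_uncurry_left.fderiv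
  rw [this]
  exact (hf.continuous_fderiv one_ne_zero).clm_comp continuous_const

end Partial

theorem hasFDerivAt_intervalIntegral_of_continuous_fderiv {E G : Type*} [NormedAddCommGroup E]
    [NormedSpace ℝ E] [NormedAddCommGroup G] [NormedSpace ℝ G] [CompleteSpace G]
    {f : E → ℝ → G} {f' : E → ℝ → E →L[ℝ] G} {a b : ℝ} (x₀ : E)
    (hf : ∀ x, Continuous (f x)) (hf' : Continuous (uncurry f'))
    (hderiv : ∀ x t, HasFDerivAt (fun x' => f x' t) (f' x t) x) :
    HasFDerivAt (fun x => ∫ t in a..b, f x t) (∫ t in a..b, f' x₀ t) x₀ := by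
  have hf'₀ : Continuous (f' x₀) := hf'.uncurry_left x₀
  obtain ⟨C, hC⟩ := (isCompact_uIcc (a := a) (b := b)).exists_bound_of_continuousOn
    hf'₀.continuousOn
  -- tube lemma: the bound at `x₀` persists, up to `1`, on a neighbourhood of `{x₀} × [a, b]`
  have hbound : ∀ᶠ x in 𝓝 x₀, ∀ t ∈ uIcc a b, ‖f' x t‖ ≤ C + 1 := by
    refine isCompact_uIcc.eventually_forall_of_forall_eventually fun t ht => ?_
    have hlt : ‖f' x₀ t‖ < C + 1 := (hC t ht).trans_lt (lt_add_one C)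
    exact (hf'.norm.continuousAt.eventually (gt_mem_nhds hlt)).mono fun _ h => h.le
  exact intervalIntegral.hasFDerivAt_integral_of_dominated_of_fderiv_le hbound
    (.of_forall fun x => (hf x).aestronglyMeasurable) ((hf x₀).intervalIntegrable a b)
    hf'₀.aestronglyMeasurable (.of_forall fun t ht x hx => hx t (uIoc_subset_uIcc ht))
    (intervalIntegrable_const (c := C + 1)) (.of_forall fun t _ x _ => hderiv x t)

section SqError

variable {E V W : Type*} [NormedAddCommGroup E] [NormedSpace ℝ E] [NormedAddCommGroup V]
  [NormedSpace ℝ V] [NormedAddCommGroup W] [InnerProductSpace ℝ W]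
  {X : E → ℝ → V} {H : V → W} {Y : ℝ → W}

variable (X H Y) in
noncomputable def sqErrorFDeriv (x : E) (t : ℝ) : E →L[ℝ] ℝ :=
  2 • (innerSL ℝ (H (X x t) - Y t)).comp
    ((fderiv ℝ H (X x t)).comp (fderiv ℝ (fun x' => X x' t) x))

theorem sqErrorFDeriv_apply (x : E) (t : ℝ) (δ : E) :
    sqErrorFDeriv X H Y x t δ
      = 2 * ⟪H (X x t) - Y t, fderiv ℝ H (X x t) (fderiv ℝ (fun x' => X x' t) x δ)⟫ := by
  simp only [sqErrorFDeriv, smul_apply, comp_apply, innerSL_apply_apply, nsmul_eq_mul,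
    Nat.cast_ofNat]

theorem continuous_sqErrorFDeriv (hX : ContDiff ℝ 1 (uncurry X)) (hH : ContDiff ℝ 1 H)
    (hY : Continuous Y) : Continuous (uncurry (sqErrorFDeriv X H Y)) :=
  (((innerSL ℝ).continuous.comp ((hH.continuous.comp hX.continuous).sub
    (hY.comp continuous_snd))).clm_comp (((hH.continuous_fderiv one_ne_zero).comp
      hX.continuous).clm_comp hX.continuous_fderiv_uncurry_left)).const_smul 2

theorem hasFDerivAt_integral_sqError (hX : ContDiff ℝ 1 (uncurry X)) (hH : ContDiff ℝ 1 H)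
    (hY : Continuous Y) (a b : ℝ) (x₀ : E) :
    HasFDerivAt (fun x => ∫ t in a..b, ‖Y t - H (X x t)‖ ^ 2)
      (∫ t in a..b, sqErrorFDeriv X H Y x₀ t) x₀ := by
  refine hasFDerivAt_intervalIntegral_of_continuous_fderiv x₀
    (fun x => (hY.sub (hH.continuous.comp (hX.continuous.uncurry_left x))).norm.pow 2)
    (continuous_sqErrorFDeriv hX hH hY) fun x t => ?_
  have hXt := (hX.differentiable one_ne_zero (x, t)).hasFDerivAt_uncurry_left.differentiableAt
  simp_rw [norm_sub_rev (Y t)]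
  exact (((hH.differentiable one_ne_zero _).hasFDerivAt.comp x hXt.hasFDerivAt).sub_const
    (Y t)).norm_sq

end SqError

section Variational

variable {E V : Type*} [NormedAddCommGroup E] [NormedSpace ℝ E] [NormedAddCommGroup V]
  [NormedSpace ℝ V]

theorem ContDiffAt.hasDerivAt_mixedPartial {G : E × ℝ → V} {x : E} {t : ℝ}
    (hG : ContDiffAt ℝ 2 G (x, t)) (δ : E) :
    HasDerivAt (fun s => fderiv ℝ G (x, s) (δ, 0))
      (fderiv ℝ (fun q => fderiv ℝ G q (0, 1)) (x, t) (δ, 0)) t := by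
  have hG' : HasFDerivAt (fderiv ℝ G) (fderiv ℝ (fderiv ℝ G) (x, t)) (x, t) :=
    ((hG.fderiv_right (m := 1) (by norm_num)).differentiableAt one_ne_zero).hasFDerivAt
  have hline : HasDerivAt (fun s : ℝ => (x, s)) ((0 : E), (1 : ℝ)) t :=
    (hasDerivAt_const t x).prodMk (hasDerivAt_id t)
  have hsymm := hG.isSymmSndFDerivAt (by simp [minSmoothness_of_isRCLikeNormedField])
  have h := (hG'.comp_hasDerivAt t hline).clm_apply (hasDerivAt_const t ((δ, 0) : E × ℝ))
  rw [fderiv_clm_apply hG'.differentiableAt (differentiableAt_const _)]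
  simpa [hsymm (0, 1) (δ, 0)] using h

theorem hasDerivAt_fderiv_param {X : E → ℝ → V} {F : E → V → V} {θ : E} {t : ℝ}
    (hX : ContDiff ℝ 2 (uncurry X)) (hF : DifferentiableAt ℝ (uncurry F) (θ, X θ t))
    (hforward : ∀ᶠ q in 𝓝 (θ, t), HasDerivAt (X q.1) (F q.1 (X q.1 q.2)) q.2) (δ : E) :
    HasDerivAt (fun s => fderiv ℝ (fun x => X x s) θ δ)
      (fderiv ℝ (F θ) (X θ t) (fderiv ℝ (fun x => X x t) θ δ)
        + fderiv ℝ (fun x => F x (X θ t)) θ δ) t := by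
  have hXd := hX.differentiable two_ne_zero
  have hpartial : ∀ s, fderiv ℝ (fun x => X x s) θ δ = fderiv ℝ (uncurry X) (θ, s) (δ, 0) :=
    fun s => by simp [fderiv_uncurry_apply (hXd (θ, s))]
  have htime : (fun q => fderiv ℝ (uncurry X) q (0, 1)) =ᶠ[𝓝 (θ, t)]
      fun q => F q.1 (X q.1 q.2) := by
    filter_upwards [hforward] with q hq
    simp [fderiv_uncurry_apply (hXd q), hq.deriv]
  have hrhs : HasFDerivAt (fun q => F q.1 (X q.1 q.2))
      ((fderiv ℝ (uncurry F) (θ, X θ t)).comp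
        ((fst ℝ E ℝ).prod (fderiv ℝ (uncurry X) (θ, t)))) (θ, t) :=
    (hF.hasFDerivAt.comp (θ, t) (hasFDerivAt_fst.prodMk (hXd (θ, t)).hasFDerivAt) :)
  have h := (hX.contDiffAt (x := (θ, t))).hasDerivAt_mixedPartial δ
  rw [htime.fderiv_eq, hrhs.fderiv] at h
  simpa [← hpartial, fderiv_uncurry_apply hF, add_comm] using h

end Variational

section Adjoint

variable {E : Type*} [NormedAddCommGroup E] [InnerProductSpace ℝ E] [CompleteSpace E]

theorem HasDerivAt.inner_of_adjoint {A : E →L[ℝ] E} {lam u : ℝ → E} {r c : E} {t : ℝ}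
    (hlam : HasDerivAt lam ((-(adjoint A)) (lam t) + r) t) (hu : HasDerivAt u (A (u t) + c) t) :
    HasDerivAt (fun s => ⟪lam s, u s⟫) (⟪r, u t⟫ + ⟪lam t, c⟫) t := by
  refine (hlam.inner ℝ hu).congr_deriv ?_
  rw [inner_add_left, inner_add_right, neg_apply, inner_neg_left, adjoint_inner_left]
  ring

theorem integral_inner_add_integral_inner_eq_of_adjoint {A : ℝ → E →L[ℝ] E}
    {lam u r c : ℝ → E} {a b : ℝ} (hab : a ≤ b) (hlam_cont : ContinuousOn lam (Icc a b))
    (hu_cont : ContinuousOn u (Icc a b))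
    (hlam : ∀ t ∈ Ioo a b, HasDerivAt lam ((-(adjoint (A t))) (lam t) + r t) t)
    (hu : ∀ t ∈ Ioo a b, HasDerivAt u (A t (u t) + c t) t)
    (hr : IntervalIntegrable (fun t => ⟪r t, u t⟫) volume a b)
    (hc : IntervalIntegrable (fun t => ⟪lam t, c t⟫) volume a b) :
    (∫ t in a..b, ⟪r t, u t⟫) + ∫ t in a..b, ⟪lam t, c t⟫ = ⟪lam b, u b⟫ - ⟪lam a, u a⟫ := by
  rw [← intervalIntegral.integral_add hr hc]
  exact intervalIntegral.integral_eq_sub_of_hasDeriv_right_of_le hab (hlam_cont.inner hu_cont)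
    (fun t ht => ((hlam t ht).inner_of_adjoint (hu t ht)).hasDerivWithinAt) (hr.add hc)

theorem integral_inner_fderiv_param_add_integral_inner_eq {P : Type*} [NormedAddCommGroup P]
    [NormedSpace ℝ P] {X : P → ℝ → E} {F : P → E → E} {lam r : ℝ → E} {a b : ℝ} {θ : P}
    (hab : a ≤ b) (hX : ContDiff ℝ 2 (uncurry X)) (hF : ContDiff ℝ 1 (uncurry F))
    (hforward : ∀ x, ∀ t ∈ Icc a b, HasDerivAt (X x) (F x (X x t)) t)
    (hlam : ∀ t ∈ Icc a b,
      HasDerivAt lam ((-(adjoint (fderiv ℝ (F θ) (X θ t)))) (lam t) + r t) t)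
    (hr : ContinuousOn r (Icc a b)) (δ : P) :
    (∫ t in a..b, ⟪r t, fderiv ℝ (fun x => X x t) θ δ⟫)
        + ∫ t in a..b, ⟪lam t, fderiv ℝ (fun x => F x (X θ t)) θ δ⟫
      = ⟪lam b, fderiv ℝ (fun x => X x b) θ δ⟫ - ⟪lam a, fderiv ℝ (fun x => X x a) θ δ⟫ := by
  have hu : Continuous fun t => fderiv ℝ (fun x => X x t) θ δ :=
    ((hX.of_le one_le_two).continuous_fderiv_uncurry_left.uncurry_left θ).clm_apply
      continuous_const
  have hc : Continuous fun t => fderiv ℝ (fun x => F x (X θ t)) θ δ :=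
    (hF.continuous_fderiv_uncurry_left.comp
      (continuous_const.prodMk (hX.continuous.uncurry_left θ))).clm_apply continuous_const
  have hlamc : ContinuousOn lam (Icc a b) := fun t ht =>
    (hlam t ht).continuousAt.continuousWithinAt
  refine integral_inner_add_integral_inner_eq_of_adjoint hab hlamc hu.continuousOn
    (fun t ht => hlam t (Ioo_subset_Icc_self ht)) (fun t ht => ?_)
    ((hr.inner hu.continuousOn).intervalIntegrable_of_Icc hab)
    ((hlamc.inner hc.continuousOn).intervalIntegrable_of_Icc hab)
  refine hasDerivAt_fderiv_param hX (hF.differentiable one_ne_zero _) ?_ δ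
  filter_upwards [(isOpen_univ.prod isOpen_Ioo).mem_nhds ⟨mem_univ θ, ht⟩] with q hq
  exact hforward q.1 q.2 (Ioo_subset_Icc_self hq.2)

end Adjoint

theorem adjoint_state_equation_general
    (p n k : ℕ) (T : ℝ) (hT : 0 < T)
    (X : EuclideanSpace ℝ (Fin p) → ℝ → EuclideanSpace ℝ (Fin n))
    (F : EuclideanSpace ℝ (Fin p) → EuclideanSpace ℝ (Fin n) → EuclideanSpace ℝ (Fin n))
    (g : EuclideanSpace ℝ (Fin p) → EuclideanSpace ℝ (Fin n))
    (H : EuclideanSpace ℝ (Fin n) → EuclideanSpace ℝ (Fin k))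
    (Y : ℝ → EuclideanSpace ℝ (Fin k))
    (hX : ContDiff ℝ 2 (fun q : EuclideanSpace ℝ (Fin p) × ℝ => X q.1 q.2))
    (hF : ContDiff ℝ 2
      (fun q : EuclideanSpace ℝ (Fin p) × EuclideanSpace ℝ (Fin n) => F q.1 q.2))
    (hH : ContDiff ℝ 1 H) (hY : Continuous Y)
    (hforward : ∀ θ, ∀ t ∈ Set.Icc (0 : ℝ) T,
      HasDerivAt (fun s => X θ s) (F θ (X θ t)) t)
    (hinit : ∀ θ, X θ 0 = g θ)
    (θ : EuclideanSpace ℝ (Fin p))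
    (lam : ℝ → EuclideanSpace ℝ (Fin n))
    (hlamT : lam T = 0)
    (hlam : ∀ t ∈ Set.Icc (0 : ℝ) T,
      HasDerivAt lam
        ((-(ContinuousLinearMap.adjoint (fderiv ℝ (F θ) (X θ t)))) (lam t)
          + (2 : ℝ) •
            (ContinuousLinearMap.adjoint (fderiv ℝ H (X θ t))) (H (X θ t) - Y t)) t) :
    DifferentiableAt ℝ (fun θ' => ∫ t in (0 : ℝ)..T, ‖Y t - H (X θ' t)‖ ^ 2) θ ∧
    ∀ δθ : EuclideanSpace ℝ (Fin p),
      fderiv ℝ (fun θ' => ∫ t in (0 : ℝ)..T, ‖Y t - H (X θ' t)‖ ^ 2) θ δθ =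
        -(∫ t in (0 : ℝ)..T,
            (inner ℝ (lam t) (fderiv ℝ (fun θ' => F θ' (X θ t)) θ δθ) : ℝ))
          - (inner ℝ (lam 0) (fderiv ℝ g θ δθ) : ℝ) := by
  have hX1 := hX.of_le one_le_two
  have hcost := hasFDerivAt_integral_sqError hX1 hH hY 0 T θ
  refine ⟨hcost.differentiableAt, fun δθ => ?_⟩
  have hB : Continuous fun t => (2 : ℝ) • adjoint (fderiv ℝ H (X θ t)) (H (X θ t) - Y t) :=
    ((adjoint.continuous.comp ((hH.continuous_fderiv one_ne_zero).comp
      (hX.continuous.uncurry_left θ))).clm_apply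
        ((hH.continuous.comp (hX.continuous.uncurry_left θ)).sub hY)).const_smul (2 : ℝ)
  have hadj := integral_inner_fderiv_param_add_integral_inner_eq hT.le hX (hF.of_le one_le_two)
    hforward hlam hB.continuousOn δθ
  simp only [real_inner_smul_left, adjoint_inner_left, ← sqErrorFDeriv_apply, hlamT,
    inner_zero_left, zero_sub, hinit] at hadj
  rw [hcost.fderiv, intervalIntegral_apply
    (((continuous_sqErrorFDeriv hX1 hH hY).uncurry_left θ).intervalIntegrable 0 T)]
  linarith

/-- **Adjoint State Equation (Theorem 1).**
If for every parameter `θ` the trajectory `X θ` satisfies the forward state equation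
`d/dt X θ t = F θ (X θ t)` on `[0,T]` with initial condition `X θ 0 = g θ`, and `λ` solves
the adjoint equation `d/dt λ t = A t (λ t) + B t` backwards from `λ T = 0`, with
`A t = -(∂_X F_θ(X^θ_t))*` and `B t = 2 (∂_X H(X^θ_t))*(H(X^θ_t) - Y t)`, then the derivative
of the cost `J(θ) = ∫₀ᵀ ‖Y t - H (X θ t)‖² dt` in any direction `δθ` equals
`-∫₀ᵀ ⟨λ t, (∂_θ F_θ(X^θ_t)) δθ⟩ dt - ⟨λ 0, (∂_θ g θ) δθ⟩`. -/
theorem adjoint_state_equation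
    (p n k : ℕ) (T : ℝ) (hT : 0 < T)
    (X : EuclideanSpace ℝ (Fin p) → ℝ → EuclideanSpace ℝ (Fin n))
    (F : EuclideanSpace ℝ (Fin p) → EuclideanSpace ℝ (Fin n) → EuclideanSpace ℝ (Fin n))
    (g : EuclideanSpace ℝ (Fin p) → EuclideanSpace ℝ (Fin n))
    (H : EuclideanSpace ℝ (Fin n) → EuclideanSpace ℝ (Fin k))
    (Y : ℝ → EuclideanSpace ℝ (Fin k))
    (hX : ContDiff ℝ 2 (fun q : EuclideanSpace ℝ (Fin p) × ℝ => X q.1 q.2))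
    (hF : ContDiff ℝ 2
      (fun q : EuclideanSpace ℝ (Fin p) × EuclideanSpace ℝ (Fin n) => F q.1 q.2))
    (hg : ContDiff ℝ 1 g) (hH : ContDiff ℝ 1 H) (hY : Continuous Y)
    (hforward : ∀ θ, ∀ t ∈ Set.Icc (0 : ℝ) T,
      HasDerivAt (fun s => X θ s) (F θ (X θ t)) t)
    (hinit : ∀ θ, X θ 0 = g θ)
    (θ : EuclideanSpace ℝ (Fin p))
    (lam : ℝ → EuclideanSpace ℝ (Fin n))
    (hlamT : lam T = 0)
    (hlam : ∀ t ∈ Set.Icc (0 : ℝ) T,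
      HasDerivAt lam
        ((-(ContinuousLinearMap.adjoint (fderiv ℝ (F θ) (X θ t)))) (lam t)
          + (2 : ℝ) •
            (ContinuousLinearMap.adjoint (fderiv ℝ H (X θ t))) (H (X θ t) - Y t)) t) :
    DifferentiableAt ℝ (fun θ' => ∫ t in (0 : ℝ)..T, ‖Y t - H (X θ' t)‖ ^ 2) θ ∧
    ∀ δθ : EuclideanSpace ℝ (Fin p),
      fderiv ℝ (fun θ' => ∫ t in (0 : ℝ)..T, ‖Y t - H (X θ' t)‖ ^ 2) θ δθ =
        -(∫ t in (0 : ℝ)..T,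
            (inner ℝ (lam t) (fderiv ℝ (fun θ' => F θ' (X θ t)) θ δθ) : ℝ))
          - (inner ℝ (lam 0) (fderiv ℝ g θ δθ) : ℝ) :=
  adjoint_state_equation_general p n k T hT X F g H Y hX hF hH hY hforward hinit θ lam hlamT hlam
end

section
/- Suppose that for every θ the trajectory X^θ satisfies d/dt X^θ_t = F_θ(X^θ_t) on [0,T] with X^θ_0 = g(θ), that (θ,t) ↦ X^θ_t is twice continuously differentiable, and let λ : [0,T] → ℝⁿ be continuously differentiable and μ ∈ ℝⁿ. Then the θ-derivative of the Lagrangian θ ↦ L(X^θ, λ, μ, θ) in any direction δθ ∈ ℝᵖ equals ∫₀ᵀ ⟨ ∂_θ X^θ_t · δθ, 2(∂_X H(X^θ_t))*(H(X^θ_t) − Y_t) − d/dt λ_t − (∂_X F_θ(X^θ_t))* λ_t ⟩ dt − ∫₀ᵀ ⟨λ_t, (∂_θ F_θ(X^θ_t))·δθ⟩ dt + ⟨λ_T, ∂_θ X^θ_T · δθ⟩ + ⟨μ − λ_0, ∂_θ X^θ_0 · δθ⟩ − ⟨μ, (∂_θ g(θ))·δθ⟩. -/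
/-!
Along the constrained trajectories both constraint terms of the Lagrangian vanish identically
in `θ`, so its derivative is that of the misfit, obtained by differentiating under the integral.
On the other side, the sensitivity `v t = ∂_θ X^θ_t δθ` solves the linearised equation
`v' = ∂_θ F δθ + ∂_X F v` (the mixed partials of `X` commute), so integrating `d/dt ⟪λ, v⟫` by
parts turns the `λ`-terms into the boundary terms `⟪λ T, v T⟫ - ⟪λ 0, v 0⟫`, and
`v 0 = ∂_θ g δθ` cancels the `μ`-terms.
-/

open Set MeasureTheory intervalIntegral ContinuousLinearMap

section PartialDerivatives

variable {E₁ E₂ G : Type*} [NormedAddCommGroup E₁] [NormedSpace ℝ E₁]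
  [NormedAddCommGroup E₂] [NormedSpace ℝ E₂] [NormedAddCommGroup G] [NormedSpace ℝ G]
  {f : E₁ → E₂ → G}

theorem hasFDerivAt_partial_left {x : E₁} {y : E₂} (hf : DifferentiableAt ℝ ↿f (x, y)) :
    HasFDerivAt (fun x' => f x' y) ((fderiv ℝ ↿f (x, y)).comp (inl ℝ E₁ E₂)) x :=
  HasFDerivAt.comp (g := ↿f) x hf.hasFDerivAt (hasFDerivAt_prodMk_left (𝕜 := ℝ) x y)

theorem hasFDerivAt_partial_right {x : E₁} {y : E₂} (hf : DifferentiableAt ℝ ↿f (x, y)) :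
    HasFDerivAt (f x) ((fderiv ℝ ↿f (x, y)).comp (inr ℝ E₁ E₂)) y :=
  HasFDerivAt.comp (g := ↿f) y hf.hasFDerivAt (hasFDerivAt_prodMk_right x y)

theorem continuous_fderiv_partial_left (hf : ContDiff ℝ 1 ↿f) :
    Continuous fun q : E₁ × E₂ => fderiv ℝ (fun x => f x q.2) q.1 := by
  have hdiff := hf.differentiable one_ne_zero
  simp_rw [fun q : E₁ × E₂ => (hasFDerivAt_partial_left (hdiff q)).fderiv]
  exact (hf.continuous_fderiv one_ne_zero).clm_comp continuous_const

theorem continuous_fderiv_partial_right (hf : ContDiff ℝ 1 ↿f) :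
    Continuous fun q : E₁ × E₂ => fderiv ℝ (f q.1) q.2 := by
  have hdiff := hf.differentiable one_ne_zero
  simp_rw [fun q : E₁ × E₂ => (hasFDerivAt_partial_right (hdiff q)).fderiv]
  exact (hf.continuous_fderiv one_ne_zero).clm_comp continuous_const

theorem fderiv_apply_comp_eq_add {u : E₁ → E₂} {x : E₁} (hf : DifferentiableAt ℝ ↿f (x, u x))
    (hu : DifferentiableAt ℝ u x) (δ : E₁) :
    fderiv ℝ (fun x' => f x' (u x')) x δ
      = fderiv ℝ (fun x' => f x' (u x)) x δ + fderiv ℝ (f x) (u x) (fderiv ℝ u x δ) := by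
  have hchain : HasFDerivAt (fun x' => f x' (u x'))
      ((fderiv ℝ ↿f (x, u x)).comp ((ContinuousLinearMap.id ℝ E₁).prod (fderiv ℝ u x))) x :=
    HasFDerivAt.comp (g := ↿f) x hf.hasFDerivAt ((hasFDerivAt_id x).prodMk hu.hasFDerivAt)
  rw [hchain.fderiv, (hasFDerivAt_partial_left hf).fderiv, (hasFDerivAt_partial_right hf).fderiv]
  simp only [comp_apply, prod_apply, id_apply, inl_apply, inr_apply, ← map_add,
    Prod.mk_add_mk, add_zero, zero_add]

end PartialDerivatives

section MixedPartials

variable {P G : Type*} [NormedAddCommGroup P] [NormedSpace ℝ P]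
  [NormedAddCommGroup G] [NormedSpace ℝ G]

theorem hasDerivAt_fderiv_partial_left {f : P → ℝ → G} (hf : ContDiff ℝ 2 ↿f) (x δ : P)
    (t : ℝ) :
    HasDerivAt (fun s => fderiv ℝ (fun y => f y s) x δ)
      (fderiv ℝ (fun y => deriv (f y) t) x δ) t := by
  set D := fderiv ℝ ↿f
  have hdiff : Differentiable ℝ ↿f := hf.differentiable two_ne_zero
  have hD : Differentiable ℝ D :=
    (hf.fderiv_right (m := 1) one_add_one_eq_two.le).differentiable one_ne_zero
  have hleft : (fun s => fderiv ℝ (fun y => f y s) x δ) = fun s => D (x, s) (δ, 0) := by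
    funext s
    rw [(hasFDerivAt_partial_left (hdiff (x, s))).fderiv]
    rfl
  have hright : (fun y => deriv (f y) t) = fun y => D (y, t) (0, 1) := by
    funext y
    rw [← fderiv_apply_one_eq_deriv, (hasFDerivAt_partial_right (hdiff (y, t))).fderiv]
    rfl
  have htime : HasDerivAt (fun s => D (x, s) (δ, 0)) (fderiv ℝ D (x, t) (0, 1) (δ, 0)) t := by
    have h := ((apply ℝ G (δ, (0 : ℝ))).hasFDerivAt.comp (x, t) (hD (x, t)).hasFDerivAt)
      |>.comp_hasDerivAt t ((hasDerivAt_const t x).prodMk (hasDerivAt_id t))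
    exact h
  have hparam : HasFDerivAt (fun y => D (y, t) (0, 1))
      ((apply ℝ G ((0 : P), (1 : ℝ))).comp ((fderiv ℝ D (x, t)).comp (inl ℝ P ℝ))) x := by
    have h := ((apply ℝ G ((0 : P), (1 : ℝ))).hasFDerivAt.comp (x, t) (hD (x, t)).hasFDerivAt)
      |>.comp x (hasFDerivAt_prodMk_left (𝕜 := ℝ) x t)
    exact h
  rw [hleft, hright, hparam.fderiv]
  simp only [comp_apply, inl_apply, apply_apply]
  rw [hf.contDiffAt.isSymmSndFDerivAt (by simp) (δ, 0) (0, 1)]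
  exact htime

end MixedPartials

section AdjointMethod

variable {P E K : Type*} [NormedAddCommGroup P] [NormedSpace ℝ P]

theorem hasDerivAt_sensitivity [NormedAddCommGroup E] [NormedSpace ℝ E]
    {X : P → ℝ → E} {F : P → E → E} (hX : ContDiff ℝ 2 ↿X) (hF : Differentiable ℝ ↿F) {t : ℝ}
    (hforward : ∀ θ, HasDerivAt (X θ) (F θ (X θ t)) t) (θ δ : P) :
    HasDerivAt (fun s => fderiv ℝ (fun θ' => X θ' s) θ δ)
      (fderiv ℝ (fun θ' => F θ' (X θ t)) θ δ
        + fderiv ℝ (F θ) (X θ t) (fderiv ℝ (fun θ' => X θ' t) θ δ)) t := by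
  have hderiv : (fun θ' => deriv (X θ') t) = fun θ' => F θ' (X θ' t) :=
    funext fun θ' => (hforward θ').deriv
  have hXt : DifferentiableAt ℝ (fun θ' => X θ' t) θ :=
    (hasFDerivAt_partial_left ((hX.differentiable two_ne_zero) (θ, t))).differentiableAt
  rw [← fderiv_apply_comp_eq_add (hF _) hXt, ← hderiv]
  exact hasDerivAt_fderiv_partial_left hX θ δ t

theorem hasFDerivAt_intervalIntegral_of_continuous [ProperSpace P] [NormedAddCommGroup E]
    [NormedSpace ℝ E] [CompleteSpace E] {f : P → ℝ → E} {f' : P → ℝ → P →L[ℝ] E}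
    (hf : Continuous ↿f) (hf' : Continuous ↿f') (hd : ∀ x t, HasFDerivAt (f · t) (f' x t) x)
    (a b : ℝ) (x₀ : P) :
    HasFDerivAt (fun x => ∫ t in a..b, f x t) (∫ t in a..b, f' x₀ t) x₀ := by
  obtain ⟨C, hC⟩ := ((isCompact_closedBall x₀ 1).prod isCompact_uIcc).exists_bound_of_continuousOn
    (hf'.continuousOn (s := Metric.closedBall x₀ 1 ×ˢ uIcc a b))
  have hslice : ∀ x, Continuous (f x) := fun x => hf.comp (continuous_const.prodMk continuous_id)
  exact hasFDerivAt_integral_of_dominated_of_fderiv_le (bound := fun _ => C)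
    (Metric.ball_mem_nhds x₀ one_pos) (.of_forall fun x => (hslice x).aestronglyMeasurable.restrict)
    ((hslice x₀).intervalIntegrable a b)
    (hf'.comp (continuous_const.prodMk continuous_id)).aestronglyMeasurable.restrict
    (.of_forall fun t ht x hx => hC (x, t) ⟨Metric.ball_subset_closedBall hx, uIoc_subset_uIcc ht⟩)
    intervalIntegrable_const (.of_forall fun t _ x _ => hd x t)

section InnerProduct

open scoped InnerProductSpace

variable [NormedAddCommGroup E] [InnerProductSpace ℝ E] [CompleteSpace E]
  [NormedAddCommGroup K] [InnerProductSpace ℝ K] [CompleteSpace K]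

theorem fderiv_intervalIntegral_norm_sub_sq_apply [ProperSpace P] {X : P → ℝ → E} {H : E → K}
    {Y : ℝ → K} (hX : ContDiff ℝ 1 ↿X) (hH : ContDiff ℝ 1 H) (hY : Continuous Y) (a b : ℝ)
    (θ δ : P) :
    fderiv ℝ (fun θ' => ∫ t in a..b, ‖Y t - H (X θ' t)‖ ^ 2) θ δ
      = ∫ t in a..b, ⟪fderiv ℝ (fun θ' => X θ' t) θ δ,
          (2 : ℝ) • adjoint (fderiv ℝ H (X θ t)) (H (X θ t) - Y t)⟫_ℝ := by
  set f' : P → ℝ → P →L[ℝ] ℝ := fun θ t => 2 • (innerSL ℝ (Y t - H (X θ t))).comp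
    (-(fderiv ℝ H (X θ t)).comp (fderiv ℝ (fun θ' => X θ' t) θ))
  have hd : ∀ θ t, HasFDerivAt (fun θ' => ‖Y t - H (X θ' t)‖ ^ 2) (f' θ t) θ := fun θ t => by
    have hXθ := (hasFDerivAt_partial_left ((hX.differentiable one_ne_zero) (θ, t))).differentiableAt
    exact (((hH.differentiable one_ne_zero _).hasFDerivAt.comp θ hXθ.hasFDerivAt).const_sub
      (Y t)).norm_sq
  have hf' : Continuous ↿f' :=
    ((innerSL ℝ).continuous.comp ((hY.comp continuous_snd).sub (hH.continuous.comp hX.continuous))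
      |>.clm_comp (((hH.continuous_fderiv one_ne_zero).comp hX.continuous).neg.clm_comp
        (continuous_fderiv_partial_left hX))).const_smul 2
  have hJ := hasFDerivAt_intervalIntegral_of_continuous (f' := f')
    (((hY.comp continuous_snd).sub (hH.continuous.comp hX.continuous)).norm.pow 2) hf' hd a b θ
  have hint : IntervalIntegrable (f' θ) volume a b :=
    (hf'.comp (continuous_const.prodMk continuous_id)).intervalIntegrable a b
  rw [hJ.fderiv, intervalIntegral_apply hint]
  refine integral_congr fun t _ => ?_
  simp only [f', smul_apply, comp_apply, neg_apply, innerSL_apply_apply, real_inner_smul_right,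
    adjoint_inner_right, inner_neg_right, real_inner_comm, ← inner_neg_left, neg_sub, nsmul_eq_mul,
    Nat.cast_ofNat]

theorem integral_inner_sub_deriv_sub_adjoint {a b : ℝ} (hab : a ≤ b) {v lam lam' c w : ℝ → E}
    {B : ℝ → E →L[ℝ] E} (hv : ∀ t ∈ Icc a b, HasDerivAt v (c t + B t (v t)) t)
    (hlam : ∀ t ∈ Icc a b, HasDerivAt lam (lam' t) t) (hc : ContinuousOn c (Icc a b))
    (hB : ContinuousOn B (Icc a b)) (hlam' : ContinuousOn lam' (Icc a b))
    (hw : ContinuousOn w (Icc a b)) :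
    (∫ t in a..b, ⟪v t, w t - lam' t - adjoint (B t) (lam t)⟫_ℝ) - (∫ t in a..b, ⟪lam t, c t⟫_ℝ)
      + ⟪lam b, v b⟫_ℝ - ⟪lam a, v a⟫_ℝ = ∫ t in a..b, ⟪v t, w t⟫_ℝ := by
  have hI : ∀ {f : ℝ → ℝ}, ContinuousOn f (Icc a b) → IntervalIntegrable f volume a b :=
    fun hf => hf.intervalIntegrable_of_Icc hab
  have hvc : ContinuousOn v (Icc a b) := fun t ht => (hv t ht).continuousAt.continuousWithinAt
  have hlc : ContinuousOn lam (Icc a b) := fun t ht =>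
    (hlam t ht).continuousAt.continuousWithinAt
  have hv' : ContinuousOn (fun t => c t + B t (v t)) (Icc a b) := hc.fun_add (hB.clm_apply hvc)
  have hadj : ContinuousOn (fun t => adjoint (B t) (lam t)) (Icc a b) :=
    (adjoint.continuous.comp_continuousOn hB).clm_apply hlc
  have hibp : ∫ t in a..b, (⟪lam t, c t + B t (v t)⟫_ℝ + ⟪lam' t, v t⟫_ℝ)
      = ⟪lam b, v b⟫_ℝ - ⟪lam a, v a⟫_ℝ := by
    refine integral_eq_sub_of_hasDerivAt (f := fun t => ⟪lam t, v t⟫_ℝ) (fun t ht => ?_)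
      (hI ((hlc.inner hv').fun_add (hlam'.inner hvc)))
    rw [uIcc_of_le hab] at ht
    exact (hlam t ht).inner ℝ (hv t ht)
  have hpointwise : EqOn
      (fun t => ⟪v t, w t - lam' t - adjoint (B t) (lam t)⟫_ℝ - ⟪lam t, c t⟫_ℝ)
      (fun t => ⟪v t, w t⟫_ℝ - (⟪lam t, c t + B t (v t)⟫_ℝ + ⟪lam' t, v t⟫_ℝ)) (uIcc a b) := by
    intro t _
    simp only [inner_sub_right, inner_add_right, adjoint_inner_right, real_inner_comm]
    ring
  rw [← integral_sub (hI (hvc.inner ((hw.fun_sub hlam').fun_sub hadj))) (hI (hlc.inner hc)),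
    integral_congr hpointwise, integral_sub (hI (hvc.inner hw))
      (hI ((hlc.inner hv').fun_add (hlam'.inner hvc))), hibp]
  ring

end InnerProduct

end AdjointMethod

theorem lagrangian_derivative_general
    (p n k : ℕ) (T : ℝ) (hT : 0 < T)
    (X : EuclideanSpace ℝ (Fin p) → ℝ → EuclideanSpace ℝ (Fin n))
    (F : EuclideanSpace ℝ (Fin p) → EuclideanSpace ℝ (Fin n) → EuclideanSpace ℝ (Fin n))
    (g : EuclideanSpace ℝ (Fin p) → EuclideanSpace ℝ (Fin n))
    (H : EuclideanSpace ℝ (Fin n) → EuclideanSpace ℝ (Fin k))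
    (Y : ℝ → EuclideanSpace ℝ (Fin k))
    (hX : ContDiff ℝ 2 (fun q : EuclideanSpace ℝ (Fin p) × ℝ => X q.1 q.2))
    (hF : ContDiff ℝ 2
      (fun q : EuclideanSpace ℝ (Fin p) × EuclideanSpace ℝ (Fin n) => F q.1 q.2))
    (hH : ContDiff ℝ 1 H) (hY : Continuous Y)
    (hforward : ∀ θ, ∀ t ∈ Set.Icc (0 : ℝ) T,
      HasDerivAt (fun s => X θ s) (F θ (X θ t)) t)
    (hinit : ∀ θ, X θ 0 = g θ)
    (lam : ℝ → EuclideanSpace ℝ (Fin n)) (hlam : ContDiff ℝ 1 lam)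
    (μ : EuclideanSpace ℝ (Fin n))
    (θ : EuclideanSpace ℝ (Fin p)) :
    ∀ δθ : EuclideanSpace ℝ (Fin p),
      fderiv ℝ (fun θ' =>
        (∫ t in (0 : ℝ)..T, ‖Y t - H (X θ' t)‖ ^ 2)
          + (∫ t in (0 : ℝ)..T,
              (inner ℝ (lam t) (deriv (fun s => X θ' s) t - F θ' (X θ' t)) : ℝ))
          + (inner ℝ μ (X θ' 0 - g θ') : ℝ)) θ δθ =
      (∫ t in (0 : ℝ)..T,
          (inner ℝ (fderiv ℝ (fun θ' => X θ' t) θ δθ)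
            ((2 : ℝ) • (ContinuousLinearMap.adjoint (fderiv ℝ H (X θ t)))
                (H (X θ t) - Y t)
              - deriv lam t
              - (ContinuousLinearMap.adjoint (fderiv ℝ (F θ) (X θ t))) (lam t)) : ℝ))
        - (∫ t in (0 : ℝ)..T,
            (inner ℝ (lam t) (fderiv ℝ (fun θ' => F θ' (X θ t)) θ δθ) : ℝ))
        + (inner ℝ (lam T) (fderiv ℝ (fun θ' => X θ' T) θ δθ) : ℝ)
        + (inner ℝ (μ - lam 0) (fderiv ℝ (fun θ' => X θ' 0) θ δθ) : ℝ)
        - (inner ℝ μ (fderiv ℝ g θ δθ) : ℝ) := by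
  intro δθ
  have hXθ : Continuous (X θ) := hX.continuous.comp (continuous_const.prodMk continuous_id)
  have hFXθ : Continuous fun t => (θ, X θ t) := continuous_const.prodMk hXθ
  have hconstraint : ∀ θ', ∫ t in (0 : ℝ)..T,
      (inner ℝ (lam t) (deriv (fun s => X θ' s) t - F θ' (X θ' t)) : ℝ) = 0 := fun θ' =>
    (integral_congr fun t ht => by
      simp [(hforward θ' t (by rwa [uIcc_of_le hT.le] at ht)).deriv]).trans integral_zero
  have hsens := fun t (ht : t ∈ Icc 0 T) =>
    hasDerivAt_sensitivity hX (hF.differentiable two_ne_zero) (fun θ' => hforward θ' t ht) θ δθ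
  have hc : Continuous fun t => fderiv ℝ (fun θ' => F θ' (X θ t)) θ δθ :=
    ((continuous_fderiv_partial_left (hF.of_le one_le_two)).comp hFXθ).clm_apply continuous_const
  have hB : Continuous fun t => fderiv ℝ (F θ) (X θ t) :=
    (continuous_fderiv_partial_right (hF.of_le one_le_two)).comp hFXθ
  have hw : Continuous fun t =>
      (2 : ℝ) • adjoint (fderiv ℝ H (X θ t)) (H (X θ t) - Y t) :=
    ((adjoint.continuous.comp ((hH.continuous_fderiv one_ne_zero).comp hXθ)).clm_apply
      ((hH.continuous.comp hXθ).sub hY)).fun_const_smul 2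
  have hadjoint := integral_inner_sub_deriv_sub_adjoint hT.le hsens
    (fun t _ => (hlam.differentiable one_ne_zero t).hasDerivAt) hc.continuousOn hB.continuousOn
    (hlam.continuous_deriv le_rfl).continuousOn hw.continuousOn
  simp only [hconstraint, hinit, sub_self, inner_zero_right, add_zero] at hadjoint ⊢
  rw [fderiv_intervalIntegral_norm_sub_sq_apply (hX.of_le one_le_two) hH hY, ← hadjoint,
    inner_sub_left]
  ring

/-- Derivative of the Lagrangian along the constrained trajectory: under the forward
constraints, for continuously differentiable `λ` and any `μ`, the θ-derivative of
`θ ↦ L(X^θ, λ, μ, θ)` in direction `δθ` equals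
`∫₀ᵀ ⟨∂_θX^θ_t δθ, 2(∂_X H)*(H(X^θ_t) - Y t) - d/dt λ t - (∂_X F_θ)* λ t⟩ dt
 - ∫₀ᵀ ⟨λ t, (∂_θ F_θ(X^θ_t)) δθ⟩ dt + ⟨λ T, ∂_θX^θ_T δθ⟩ + ⟨μ - λ 0, ∂_θX^θ_0 δθ⟩
 - ⟨μ, (∂_θ g θ) δθ⟩`. -/
theorem lagrangian_derivative
    (p n k : ℕ) (T : ℝ) (hT : 0 < T)
    (X : EuclideanSpace ℝ (Fin p) → ℝ → EuclideanSpace ℝ (Fin n))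
    (F : EuclideanSpace ℝ (Fin p) → EuclideanSpace ℝ (Fin n) → EuclideanSpace ℝ (Fin n))
    (g : EuclideanSpace ℝ (Fin p) → EuclideanSpace ℝ (Fin n))
    (H : EuclideanSpace ℝ (Fin n) → EuclideanSpace ℝ (Fin k))
    (Y : ℝ → EuclideanSpace ℝ (Fin k))
    (hX : ContDiff ℝ 2 (fun q : EuclideanSpace ℝ (Fin p) × ℝ => X q.1 q.2))
    (hF : ContDiff ℝ 2
      (fun q : EuclideanSpace ℝ (Fin p) × EuclideanSpace ℝ (Fin n) => F q.1 q.2))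
    (hg : ContDiff ℝ 1 g) (hH : ContDiff ℝ 1 H) (hY : Continuous Y)
    (hforward : ∀ θ, ∀ t ∈ Set.Icc (0 : ℝ) T,
      HasDerivAt (fun s => X θ s) (F θ (X θ t)) t)
    (hinit : ∀ θ, X θ 0 = g θ)
    (lam : ℝ → EuclideanSpace ℝ (Fin n)) (hlam : ContDiff ℝ 1 lam)
    (μ : EuclideanSpace ℝ (Fin n))
    (θ : EuclideanSpace ℝ (Fin p)) :
    ∀ δθ : EuclideanSpace ℝ (Fin p),
      fderiv ℝ (fun θ' =>
        (∫ t in (0 : ℝ)..T, ‖Y t - H (X θ' t)‖ ^ 2)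
          + (∫ t in (0 : ℝ)..T,
              (inner ℝ (lam t) (deriv (fun s => X θ' s) t - F θ' (X θ' t)) : ℝ))
          + (inner ℝ μ (X θ' 0 - g θ') : ℝ)) θ δθ =
      (∫ t in (0 : ℝ)..T,
          (inner ℝ (fderiv ℝ (fun θ' => X θ' t) θ δθ)
            ((2 : ℝ) • (ContinuousLinearMap.adjoint (fderiv ℝ H (X θ t)))
                (H (X θ t) - Y t)
              - deriv lam t
              - (ContinuousLinearMap.adjoint (fderiv ℝ (F θ) (X θ t))) (lam t)) : ℝ))
        - (∫ t in (0 : ℝ)..T,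
            (inner ℝ (lam t) (fderiv ℝ (fun θ' => F θ' (X θ t)) θ δθ) : ℝ))
        + (inner ℝ (lam T) (fderiv ℝ (fun θ' => X θ' T) θ δθ) : ℝ)
        + (inner ℝ (μ - lam 0) (fderiv ℝ (fun θ' => X θ' 0) θ δθ) : ℝ)
        - (inner ℝ μ (fderiv ℝ g θ δθ) : ℝ) :=
  lagrangian_derivative_general p n k T hT X F g H Y hX hF hH hY hforward hinit lam hlam μ θ
end
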